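/- Let (G, N, *) be a fuzzy normed gyrogroup with induced fuzzy gyronorm metric M. Then the right-gyrotranslation inequality (M(x⊕a, y⊕a, t) ≥ M(x,y,t) for all x,y,a,t) is equivalent to Klee's condition (M(x⊕y, a⊕b, t+s) ≥ M(x,a,t) * M(y,b,s) for all x,y,a,b,t,s). -/
import Mathlib


open Filter Topology

universe u

class Gyrogroup (G : Type u) where
  op : G → G → G
  e : G
  neg : G → G
  gyr : G → G → G → G
  op_left_id : ∀ x, op e x = x
  op_left_neg : ∀ x, op (neg x) x = e
  gyr_bijective : ∀ a b, Function.Bijective (gyr a b)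
  gyr_op : ∀ a b x y, gyr a b (op x y) = op (gyr a b x) (gyr a b y)
  gyrassoc : ∀ x y z, op x (op y z) = op (op x y) (gyr x y z)
  left_loop : ∀ x y, gyr (op x y) y = gyr x y

open Gyrogroup

/-- A continuous t-norm on `[0,1]`, represented as a binary operation on `ℝ`
with the t-norm axioms on `[0,1]`. -/
structure ContinuousTNorm (star : ℝ → ℝ → ℝ) : Prop where
  mem : ∀ a b, a ∈ Set.Icc (0:ℝ) 1 → b ∈ Set.Icc (0:ℝ) 1 → star a b ∈ Set.Icc (0:ℝ) 1
  comm : ∀ a b, star a b = star b a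
  assoc : ∀ a b c, star (star a b) c = star a (star b c)
  one_id : ∀ a, a ∈ Set.Icc (0:ℝ) 1 → star a 1 = a
  mono : ∀ a b c d, a ≤ c → b ≤ d → star a b ≤ star c d
  cont : ContinuousOn (fun p : ℝ × ℝ => star p.1 p.2) (Set.Icc 0 1 ×ˢ Set.Icc 0 1)

/-- A fuzzy metric in the sense of George and Veeramani. -/
structure IsFuzzyMetric {X : Type u} (M : X → X → ℝ → ℝ) (star : ℝ → ℝ → ℝ) : Prop where
  mem : ∀ x y t, 0 < t → M x y t ∈ Set.Icc (0:ℝ) 1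
  pos : ∀ x y t, 0 < t → 0 < M x y t
  eq_one_iff : ∀ x y, (∀ t, 0 < t → M x y t = 1) ↔ x = y
  symm : ∀ x y t, 0 < t → M x y t = M y x t
  tri : ∀ x y z t s, 0 < t → 0 < s → star (M x y t) (M y z s) ≤ M x z (t + s)
  cont : ∀ x y, ContinuousOn (M x y) (Set.Ioi 0)

/-- A gyronorm on a gyrogroup. -/
structure IsGyronorm {G : Type u} [Gyrogroup G] (n : G → ℝ) : Prop where
  nonneg : ∀ x, 0 ≤ n x
  eq_zero_iff : ∀ x, n x = 0 ↔ x = (Gyrogroup.e : G)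
  neg_eq : ∀ x, n (Gyrogroup.neg x) = n x
  subadd : ∀ x y, n (Gyrogroup.op x y) ≤ n x + n y
  gyr_eq : ∀ a b x, n (Gyrogroup.gyr a b x) = n x

/-- A fuzzy gyronorm on a gyrogroup. -/
structure IsFuzzyGyronorm {G : Type u} [Gyrogroup G] (N : G → ℝ → ℝ) (star : ℝ → ℝ → ℝ) : Prop where
  mem : ∀ x t, 0 < t → N x t ∈ Set.Icc (0:ℝ) 1
  pos : ∀ x t, 0 < t → 0 < N x t
  eq_one_iff : ∀ x, (∀ t, 0 < t → N x t = 1) ↔ x = (Gyrogroup.e : G)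
  neg_eq : ∀ x t, 0 < t → N (Gyrogroup.neg x) t = N x t
  subadd : ∀ x y t s, 0 < t → 0 < s → star (N x t) (N y s) ≤ N (Gyrogroup.op x y) (t + s)
  cont : ∀ x, ContinuousOn (N x) (Set.Ioi 0)
  gyr_eq : ∀ a b x t, 0 < t → N (Gyrogroup.gyr a b x) t = N x t

section GyroLemmas

variable {G : Type u} [Gyrogroup G]

lemma gy_left_mul_inj (a : G) {x y : G} (h : op a x = op a y) : x = y := by
  have h1 : ∀ z : G, op (neg a) (op a z) = gyr (neg a) a z := by
    intro z; rw [gyrassoc, op_left_neg, op_left_id]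
  have h2 : gyr (neg a) a x = gyr (neg a) a y := by
    rw [← h1, ← h1, h]
  exact (gyr_bijective (neg a) a).1 h2

lemma gy_gyr_e (a z : G) : gyr (e : G) a z = z := by
  have h := gyrassoc (e : G) a z
  rw [op_left_id, op_left_id] at h
  exact (gy_left_mul_inj a h).symm

lemma gy_gyr_neg (a z : G) : gyr (neg a) a z = z := by
  have h := left_loop (neg a) a
  rw [op_left_neg] at h
  rw [← h, gy_gyr_e]

lemma gy_left_cancel (a y : G) : op (neg a) (op a y) = y := by
  rw [gyrassoc, op_left_neg, op_left_id, gy_gyr_neg]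

lemma gy_op_e (a : G) : op a (e : G) = a := by
  apply gy_left_mul_inj (neg a)
  rw [gy_left_cancel, op_left_neg]

lemma gy_neg_neg (a : G) : neg (neg a) = a := by
  have h := gy_left_cancel (neg a) a
  rw [op_left_neg, gy_op_e] at h
  exact h

lemma gy_right_cancel (a y : G) : op a (op (neg a) y) = y := by
  have h := gy_left_cancel (neg a) y
  rwa [gy_neg_neg] at h

lemma gy_left_transl (a x y : G) :
    op (neg (op a x)) (op a y) = gyr a x (op (neg x) y) := by
  have h : op a y = op (op a x) (gyr a x (op (neg x) y)) := by
    conv_lhs => rw [← gy_right_cancel x y]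
    exact gyrassoc a x (op (neg x) y)
  rw [h, gy_left_cancel]

lemma gy_decomp (x y z : G) :
    op (neg x) z = op (op (neg x) y) (gyr (neg x) y (op (neg y) z)) := by
  conv_lhs => rw [← gy_right_cancel y z]
  exact gyrassoc (neg x) y (op (neg y) z)

end GyroLemmas

theorem right_ineq_iff_klee {G : Type u} [Gyrogroup G]
    (N : G → ℝ → ℝ) (star : ℝ → ℝ → ℝ)
    (hstar : ContinuousTNorm star) (hN : IsFuzzyGyronorm N star)
    (M : G → G → ℝ → ℝ) (hM : M = fun x y t => N (op (neg x) y) t) :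
    (∀ x y a : G, ∀ t : ℝ, 0 < t → M x y t ≤ M (op x a) (op y a) t) ↔
    (∀ x y a b : G, ∀ t s : ℝ, 0 < t → 0 < s →
      star (M x a t) (M y b s) ≤ M (op x y) (op a b) (t + s)) := by
  subst hM
  -- triangle inequality
  have tri : ∀ (x y z : G) (t s : ℝ), 0 < t → 0 < s →
      star (N (op (neg x) y) t) (N (op (neg y) z) s) ≤ N (op (neg x) z) (t + s) := by
    intro x y z t s ht hs
    rw [gy_decomp x y z]
    calc star (N (op (neg x) y) t) (N (op (neg y) z) s)
        = star (N (op (neg x) y) t) (N (gyr (neg x) y (op (neg y) z)) s) := by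
          rw [hN.gyr_eq _ _ _ s hs]
      _ ≤ _ := hN.subadd _ _ t s ht hs
  -- left invariance
  have linv : ∀ (a x y : G) (t : ℝ), 0 < t →
      N (op (neg (op a x)) (op a y)) t = N (op (neg x) y) t := by
    intro a x y t ht
    rw [gy_left_transl, hN.gyr_eq _ _ _ t ht]
  -- self distance = 1
  have self1 : ∀ (a : G) (t : ℝ), 0 < t → N (op (neg a) a) t = 1 := by
    intro a t ht
    rw [op_left_neg]
    exact ((hN.eq_one_iff (e : G)).mpr rfl) t ht
  constructor
  · intro hR x y a b t s ht hs
    calc star (N (op (neg x) a) t) (N (op (neg y) b) s)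
        ≤ star (N (op (neg (op x y)) (op a y)) t)
            (N (op (neg (op a y)) (op a b)) s) := by
          apply hstar.mono
          · exact hR x a y t ht
          · rw [linv a y b s hs]
      _ ≤ N (op (neg (op x y)) (op a b)) (t + s) := tri _ _ _ t s ht hs
  · intro hK x y a t ht
    have key : ∀ s : ℝ, 0 < s →
        N (op (neg x) y) t ≤ N (op (neg (op x a)) (op y a)) (t + s) := by
      intro s hs
      have h := hK x a y a t s ht hs
      simp only at h
      rwa [self1 a s hs, hstar.one_id _ (hN.mem _ t ht)] at h
    show N (op (neg x) y) t ≤ N (op (neg (op x a)) (op y a)) t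
    set f : ℝ → ℝ := N (op (neg (op x a)) (op y a)) with hf
    have hcont : ContinuousWithinAt f (Set.Ioi 0) t := hN.cont _ t ht
    have htend : Filter.Tendsto f (nhdsWithin t (Set.Ioi t)) (nhds (f t)) :=
      hcont.tendsto.mono_left (nhdsWithin_mono t (Set.Ioi_subset_Ioi ht.le))
    refine ge_of_tendsto htend ?_
    filter_upwards [self_mem_nhdsWithin] with u hu
    have hs : 0 < u - t := sub_pos.mpr hu
    have := key (u - t) hs
    rwa [add_sub_cancel] at this
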